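/- Let 0 < a < b. There exists a constant C₅ = C₅(a,b,d,α) > 0 such that for every bounded measurable function F : ℝ^d×ℝ^d → [0,∞), every t > 0 and all x, y ∈ ℝ^d with |x−y| ≤ t^{1/2}, ∫₀^t ∫_{ℝ^d×ℝ^d} Γ_a(t−s; x−z)·Γ_b(s; w−y)·F(z,w)/|z−w|^{d+α} dz dw ds ≤ C₅·Γ_b(t; x−y)·∫₀^t ∫_{ℝ^d×ℝ^d} ( Γ_a(s; x−z) + Γ_b(s; w−y) )·F(z,w)/|z−w|^{d+α} dz dw ds. -/

import Mathlib

open MeasureTheory Set ENNReal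

noncomputable def Gam (d : ℕ) (lam t : ℝ) (x : EuclideanSpace ℝ (Fin d)) : ℝ :=
  t ^ (-(d : ℝ) / 2) * Real.exp (-lam * ‖x‖ ^ 2 / t)

lemma gam_nonneg (d : ℕ) (lam t : ℝ) (ht : 0 ≤ t) (x : EuclideanSpace ℝ (Fin d)) :
    0 ≤ Gam d lam t x :=
  mul_nonneg (Real.rpow_nonneg ht _) (Real.exp_pos _).le

lemma gam_le (d : ℕ) (lam t : ℝ) (hlam : 0 ≤ lam) (ht : 0 ≤ t)
    (x : EuclideanSpace ℝ (Fin d)) : Gam d lam t x ≤ t ^ (-(d : ℝ) / 2) := by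
  have h1 : Real.exp (-lam * ‖x‖ ^ 2 / t) ≤ 1 := by
    rw [Real.exp_le_one_iff]
    apply div_nonpos_of_nonpos_of_nonneg _ ht
    have : 0 ≤ lam * ‖x‖ ^ 2 := mul_nonneg hlam (sq_nonneg _)
    linarith
  calc Gam d lam t x ≤ t ^ (-(d : ℝ) / 2) * 1 :=
        mul_le_mul_of_nonneg_left h1 (Real.rpow_nonneg ht _)
    _ = t ^ (-(d : ℝ) / 2) := mul_one _

lemma gam_key (d : ℕ) (a b t s : ℝ) (ha : 0 < a) (hb : 0 < b) (ht : 0 < t)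
    (hs : 0 < s) (hst : s ≤ t) (x y u v : EuclideanSpace ℝ (Fin d))
    (hxy : ‖x - y‖ ≤ t ^ ((1 : ℝ) / 2)) :
    Gam d a (t - s) u * Gam d b s v ≤
      (2 ^ ((d : ℝ) / 2) * Real.exp b * Gam d b t (x - y)) *
        (Gam d a (t - s) u + Gam d b s v) := by
  have he : -(d : ℝ) / 2 ≤ 0 := by
    have : (0:ℝ) ≤ (d:ℝ) := Nat.cast_nonneg d
    linarith
  have hxy2 : ‖x - y‖ ^ 2 ≤ t := by
    calc ‖x - y‖ ^ 2 ≤ (t ^ ((1:ℝ)/2)) ^ 2 := pow_le_pow_left₀ (norm_nonneg _) hxy 2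
      _ = t := by
          rw [← Real.rpow_natCast (t ^ ((1:ℝ)/2)) 2, ← Real.rpow_mul ht.le]
          norm_num
  have hg0 : 0 ≤ Gam d b t (x - y) := gam_nonneg _ _ _ ht.le _
  have hg1 : t ^ (-(d:ℝ)/2) * Real.exp (-b) ≤ Gam d b t (x - y) := by
    unfold Gam
    apply mul_le_mul_of_nonneg_left _ (Real.rpow_nonneg ht.le _)
    apply Real.exp_le_exp.2
    have h2 : b * ‖x - y‖ ^ 2 / t ≤ b := by
      rw [div_le_iff₀ ht]
      nlinarith
    have h3 : -b * ‖x - y‖ ^ 2 / t = -(b * ‖x - y‖ ^ 2 / t) := by ring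
    rw [h3]
    linarith
  have hte : t ^ (-(d:ℝ)/2) ≤ Real.exp b * Gam d b t (x - y) := by
    have h4 := mul_le_mul_of_nonneg_left hg1 (Real.exp_pos b).le
    calc t ^ (-(d:ℝ)/2) = Real.exp b * (t ^ (-(d:ℝ)/2) * Real.exp (-b)) := by
          rw [Real.exp_neg]
          have := (Real.exp_pos b).ne'
          field_simp
      _ ≤ _ := h4
  have h2t : (t/2) ^ (-(d:ℝ)/2) = 2 ^ ((d:ℝ)/2) * t ^ (-(d:ℝ)/2) := by
    rw [div_eq_mul_inv, Real.mul_rpow ht.le (by norm_num),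
      Real.inv_rpow (by norm_num), ← Real.rpow_neg (by norm_num)]
    ring_nf
  have hC : (t/2) ^ (-(d:ℝ)/2) ≤ 2 ^ ((d:ℝ)/2) * Real.exp b * Gam d b t (x - y) := by
    rw [h2t, mul_assoc]
    exact mul_le_mul_of_nonneg_left hte (Real.rpow_nonneg (by norm_num) _)
  set C : ℝ := 2 ^ ((d:ℝ)/2) * Real.exp b * Gam d b t (x - y) with hCdef
  have hCnon : 0 ≤ C := by
    apply mul_nonneg (mul_nonneg (Real.rpow_nonneg (by norm_num) _) (Real.exp_pos _).le) hg0
  have hanon : 0 ≤ Gam d a (t - s) u := gam_nonneg _ _ _ (by linarith) _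
  have hbnon : 0 ≤ Gam d b s v := gam_nonneg _ _ _ hs.le _
  rcases le_or_gt s (t/2) with hcase | hcase
  · have hA : Gam d a (t - s) u ≤ C := by
      calc Gam d a (t - s) u ≤ (t - s) ^ (-(d:ℝ)/2) := gam_le _ _ _ ha.le (by linarith) _
        _ ≤ (t/2) ^ (-(d:ℝ)/2) := Real.rpow_le_rpow_of_nonpos (by linarith) (by linarith) he
        _ ≤ C := hC
    nlinarith [mul_le_mul_of_nonneg_right hA hbnon, mul_nonneg hCnon hanon]
  · have hB : Gam d b s v ≤ C := by
      calc Gam d b s v ≤ s ^ (-(d:ℝ)/2) := gam_le _ _ _ hb.le hs.le _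
        _ ≤ (t/2) ^ (-(d:ℝ)/2) := Real.rpow_le_rpow_of_nonpos (by linarith) hcase.le he
        _ ≤ C := hC
    nlinarith [mul_le_mul_of_nonneg_right hB hanon, mul_nonneg hCnon hbnon]

lemma reflect_lintegral (t : ℝ) (ht : 0 < t) (ψ : ℝ → ℝ≥0∞) :
    ∫⁻ s in Set.Ioc (0:ℝ) t, ψ (t - s) = ∫⁻ s in Set.Ioc (0:ℝ) t, ψ s := by
  have h1 : MeasurePreserving (fun s : ℝ => t - s) volume volume :=
    Measure.measurePreserving_sub_left volume t
  have h2 : MeasurableEmbedding (fun s : ℝ => t - s) :=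
    (MeasurableEquiv.subLeft t).measurableEmbedding
  have hpre : (fun s : ℝ => t - s) ⁻¹' Set.Ico 0 t = Set.Ioc 0 t := by
    ext s
    simp only [Set.mem_preimage, Set.mem_Ico, Set.mem_Ioc]
    constructor
    · rintro ⟨h3, h4⟩; exact ⟨by linarith, by linarith⟩
    · rintro ⟨h3, h4⟩; exact ⟨by linarith, by linarith⟩
  calc ∫⁻ s in Set.Ioc (0:ℝ) t, ψ (t - s)
      = ∫⁻ s in (fun s : ℝ => t - s) ⁻¹' Set.Ico 0 t, ψ ((fun s : ℝ => t - s) s) := by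
        rw [hpre]
    _ = ∫⁻ s in Set.Ico (0:ℝ) t, ψ s := h1.setLIntegral_comp_preimage_emb h2 ψ _
    _ = ∫⁻ s in Set.Ioc (0:ℝ) t, ψ s := by
        rw [MeasureTheory.Measure.restrict_congr_set Ico_ae_eq_Ioc]

lemma pt_bound (A B Fz n Cg : ℝ) (hA : 0 ≤ A) (hB : 0 ≤ B) (hF : 0 ≤ Fz) (hn : 0 ≤ n)
    (hCg : 0 ≤ Cg) (hkey : A * B ≤ Cg * (A + B)) :
    ENNReal.ofReal (A * B * Fz / n) ≤
      ENNReal.ofReal Cg * (ENNReal.ofReal (A * Fz / n) + ENNReal.ofReal (B * Fz / n)) := by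
  have h1 : A * B * Fz ≤ Cg * (A + B) * Fz := mul_le_mul_of_nonneg_right hkey hF
  have h2 : A * B * Fz / n ≤ Cg * (A * Fz / n) + Cg * (B * Fz / n) := by
    calc A * B * Fz / n ≤ Cg * (A + B) * Fz / n := by
          rw [div_eq_mul_inv, div_eq_mul_inv]
          exact mul_le_mul_of_nonneg_right h1 (inv_nonneg.2 hn)
      _ = Cg * (A * Fz / n) + Cg * (B * Fz / n) := by ring
  calc ENNReal.ofReal (A * B * Fz / n)
      ≤ ENNReal.ofReal (Cg * (A * Fz / n) + Cg * (B * Fz / n)) := ENNReal.ofReal_le_ofReal h2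
    _ = ENNReal.ofReal (Cg * (A * Fz / n)) + ENNReal.ofReal (Cg * (B * Fz / n)) :=
        ENNReal.ofReal_add
          (mul_nonneg hCg (div_nonneg (mul_nonneg hA hF) hn))
          (mul_nonneg hCg (div_nonneg (mul_nonneg hB hF) hn))
    _ = _ := by
        rw [ENNReal.ofReal_mul hCg, ENNReal.ofReal_mul hCg, mul_add]

set_option maxHeartbeats 1000000 in
/-- generalized 3P inequality for Gaussian kernels, case |x-y| ≤ √t. -/
theorem stmt8 (d : ℕ) (hd : 2 ≤ d) (α : ℝ) (hα1 : 0 < α) (hα2 : α < 2)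
    (a b : ℝ) (ha : 0 < a) (hab : a < b) :
    ∃ C₅ : ℝ, 0 < C₅ ∧
      ∀ (F : EuclideanSpace ℝ (Fin d) → EuclideanSpace ℝ (Fin d) → ℝ),
        Measurable (Function.uncurry F) → (∀ z w, 0 ≤ F z w) →
        (∃ B : ℝ, ∀ z w, F z w ≤ B) →
        ∀ t : ℝ, 0 < t → ∀ x y : EuclideanSpace ℝ (Fin d), ‖x - y‖ ≤ t ^ ((1 : ℝ) / 2) →
          (∫⁻ s in Set.Ioc (0 : ℝ) t,
              ∫⁻ zw : EuclideanSpace ℝ (Fin d) × EuclideanSpace ℝ (Fin d),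
                ENNReal.ofReal (Gam d a (t - s) (x - zw.1) * Gam d b s (zw.2 - y) *
                  F zw.1 zw.2 / ‖zw.1 - zw.2‖ ^ ((d : ℝ) + α)))
            ≤ ENNReal.ofReal (C₅ * Gam d b t (x - y)) *
                ∫⁻ s in Set.Ioc (0 : ℝ) t,
                  ∫⁻ zw : EuclideanSpace ℝ (Fin d) × EuclideanSpace ℝ (Fin d),
                    ENNReal.ofReal ((Gam d a s (x - zw.1) + Gam d b s (zw.2 - y)) *
                      F zw.1 zw.2 / ‖zw.1 - zw.2‖ ^ ((d : ℝ) + α)) := by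
  have hb : 0 < b := ha.trans hab
  refine ⟨2 ^ ((d : ℝ) / 2) * Real.exp b, by positivity, ?_⟩
  intro F hFm hFnn _hFbd t ht x y hxy
  -- abbreviations
  set fa : ℝ → (EuclideanSpace ℝ (Fin d)) × (EuclideanSpace ℝ (Fin d)) → ℝ≥0∞ := fun u zw =>
    ENNReal.ofReal (Gam d a u (x - zw.1) * F zw.1 zw.2 / ‖zw.1 - zw.2‖ ^ ((d : ℝ) + α))
    with hfadef
  set fb : ℝ → (EuclideanSpace ℝ (Fin d)) × (EuclideanSpace ℝ (Fin d)) → ℝ≥0∞ := fun u zw =>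
    ENNReal.ofReal (Gam d b u (zw.2 - y) * F zw.1 zw.2 / ‖zw.1 - zw.2‖ ^ ((d : ℝ) + α))
    with hfbdef
  set c : ℝ≥0∞ := ENNReal.ofReal (2 ^ ((d : ℝ) / 2) * Real.exp b * Gam d b t (x - y)) with hcdef
  -- measurability
  have hFm2 : Measurable (fun zw : (EuclideanSpace ℝ (Fin d)) × (EuclideanSpace ℝ (Fin d)) => F zw.1 zw.2) := by
    rw [Function.uncurry_def] at hFm; exact hFm
  have hnm : Measurable (fun zw : (EuclideanSpace ℝ (Fin d)) × (EuclideanSpace ℝ (Fin d)) => ‖zw.1 - zw.2‖ ^ ((d : ℝ) + α)) :=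
    ((measurable_fst.sub measurable_snd).norm).pow_const _
  have hGamM : ∀ (lam : ℝ) (φ : ℝ × ((EuclideanSpace ℝ (Fin d)) × (EuclideanSpace ℝ (Fin d))) → EuclideanSpace ℝ (Fin d)), Measurable φ →
      Measurable (fun p : ℝ × ((EuclideanSpace ℝ (Fin d)) × (EuclideanSpace ℝ (Fin d))) => Gam d lam p.1 (φ p)) := by
    intro lam φ hφ
    unfold Gam
    apply Measurable.mul
    · exact measurable_fst.pow_const _
    · exact Real.measurable_exp.comp
        ((measurable_const.mul (hφ.norm.pow measurable_const)).div measurable_fst)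
  have hfa : Measurable (fun p : ℝ × ((EuclideanSpace ℝ (Fin d)) × (EuclideanSpace ℝ (Fin d))) => fa p.1 p.2) := by
    apply Measurable.ennreal_ofReal
    exact ((hGamM a _ (measurable_const.sub (measurable_fst.comp measurable_snd))).mul
      (hFm2.comp measurable_snd)).div (hnm.comp measurable_snd)
  have hfb : Measurable (fun p : ℝ × ((EuclideanSpace ℝ (Fin d)) × (EuclideanSpace ℝ (Fin d))) => fb p.1 p.2) := by
    apply Measurable.ennreal_ofReal
    exact ((hGamM b _ ((measurable_snd.comp measurable_snd).sub measurable_const)).mul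
      (hFm2.comp measurable_snd)).div (hnm.comp measurable_snd)
  have hψa : Measurable (fun u : ℝ => ∫⁻ zw : (EuclideanSpace ℝ (Fin d)) × (EuclideanSpace ℝ (Fin d)), fa u zw) := hfa.lintegral_prod_right'
  have hψb : Measurable (fun u : ℝ => ∫⁻ zw : (EuclideanSpace ℝ (Fin d)) × (EuclideanSpace ℝ (Fin d)), fb u zw) := hfb.lintegral_prod_right'
  have hψar : Measurable (fun s : ℝ => ∫⁻ zw : (EuclideanSpace ℝ (Fin d)) × (EuclideanSpace ℝ (Fin d)), fa (t - s) zw) :=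
    hψa.comp (measurable_const.sub measurable_id)
  have hfas : ∀ u : ℝ, Measurable (fun zw : (EuclideanSpace ℝ (Fin d)) × (EuclideanSpace ℝ (Fin d)) => fa u zw) := fun u =>
    hfa.comp (measurable_prodMk_left)
  have hfbs : ∀ u : ℝ, Measurable (fun zw : (EuclideanSpace ℝ (Fin d)) × (EuclideanSpace ℝ (Fin d)) => fb u zw) := fun u =>
    hfb.comp (measurable_prodMk_left)
  -- pointwise bound
  have hpt : ∀ s ∈ Set.Ioc (0:ℝ) t, ∀ zw : (EuclideanSpace ℝ (Fin d)) × (EuclideanSpace ℝ (Fin d)),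
      ENNReal.ofReal (Gam d a (t - s) (x - zw.1) * Gam d b s (zw.2 - y) *
          F zw.1 zw.2 / ‖zw.1 - zw.2‖ ^ ((d : ℝ) + α))
        ≤ c * (fa (t - s) zw + fb s zw) := by
    rintro s ⟨hs0, hst⟩ zw
    exact pt_bound _ _ _ _ _
      (gam_nonneg _ _ _ (by linarith) _) (gam_nonneg _ _ _ hs0.le _)
      (hFnn _ _) (Real.rpow_nonneg (norm_nonneg _) _)
      (mul_nonneg (by positivity) (gam_nonneg _ _ _ ht.le _))
      (gam_key d a b t s ha hb ht hs0 hst x y _ _ hxy)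
  calc (∫⁻ s in Set.Ioc (0 : ℝ) t, ∫⁻ zw : (EuclideanSpace ℝ (Fin d)) × (EuclideanSpace ℝ (Fin d)),
        ENNReal.ofReal (Gam d a (t - s) (x - zw.1) * Gam d b s (zw.2 - y) *
          F zw.1 zw.2 / ‖zw.1 - zw.2‖ ^ ((d : ℝ) + α)))
      ≤ ∫⁻ s in Set.Ioc (0 : ℝ) t, ∫⁻ zw : (EuclideanSpace ℝ (Fin d)) × (EuclideanSpace ℝ (Fin d)), c * (fa (t - s) zw + fb s zw) := by
        apply setLIntegral_mono' measurableSet_Ioc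
        intro s hs
        exact lintegral_mono fun zw => hpt s hs zw
    _ = c * ∫⁻ s in Set.Ioc (0 : ℝ) t,
          ((∫⁻ zw : (EuclideanSpace ℝ (Fin d)) × (EuclideanSpace ℝ (Fin d)), fa (t - s) zw) + ∫⁻ zw : (EuclideanSpace ℝ (Fin d)) × (EuclideanSpace ℝ (Fin d)), fb s zw) := by
        rw [← lintegral_const_mul' c _ ENNReal.ofReal_ne_top]
        refine lintegral_congr fun s => ?_
        rw [lintegral_const_mul' c _ ENNReal.ofReal_ne_top,
          lintegral_add_left (hfas (t - s))]
    _ = c * ((∫⁻ s in Set.Ioc (0 : ℝ) t, ∫⁻ zw : (EuclideanSpace ℝ (Fin d)) × (EuclideanSpace ℝ (Fin d)), fa (t - s) zw) +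
          ∫⁻ s in Set.Ioc (0 : ℝ) t, ∫⁻ zw : (EuclideanSpace ℝ (Fin d)) × (EuclideanSpace ℝ (Fin d)), fb s zw) := by
        rw [lintegral_add_left hψar]
    _ = c * ((∫⁻ s in Set.Ioc (0 : ℝ) t, ∫⁻ zw : (EuclideanSpace ℝ (Fin d)) × (EuclideanSpace ℝ (Fin d)), fa s zw) +
          ∫⁻ s in Set.Ioc (0 : ℝ) t, ∫⁻ zw : (EuclideanSpace ℝ (Fin d)) × (EuclideanSpace ℝ (Fin d)), fb s zw) := by
        rw [reflect_lintegral t ht (fun u => ∫⁻ zw : (EuclideanSpace ℝ (Fin d)) × (EuclideanSpace ℝ (Fin d)), fa u zw)]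
    _ = c * ∫⁻ s in Set.Ioc (0 : ℝ) t,
          ((∫⁻ zw : (EuclideanSpace ℝ (Fin d)) × (EuclideanSpace ℝ (Fin d)), fa s zw) + ∫⁻ zw : (EuclideanSpace ℝ (Fin d)) × (EuclideanSpace ℝ (Fin d)), fb s zw) := by
        rw [lintegral_add_left hψa]
    _ = c * ∫⁻ s in Set.Ioc (0 : ℝ) t, ∫⁻ zw : (EuclideanSpace ℝ (Fin d)) × (EuclideanSpace ℝ (Fin d)), (fa s zw + fb s zw) := by
        congr 1
        refine lintegral_congr fun s => ?_
        rw [lintegral_add_left (hfas s)]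
    _ = c * ∫⁻ s in Set.Ioc (0 : ℝ) t, ∫⁻ zw : (EuclideanSpace ℝ (Fin d)) × (EuclideanSpace ℝ (Fin d)),
          ENNReal.ofReal ((Gam d a s (x - zw.1) + Gam d b s (zw.2 - y)) *
            F zw.1 zw.2 / ‖zw.1 - zw.2‖ ^ ((d : ℝ) + α)) := by
        congr 1
        refine setLIntegral_congr_fun measurableSet_Ioc ?_
        rintro s ⟨hs0, hst⟩
        refine lintegral_congr fun zw => ?_
        rw [hfadef, hfbdef]
        dsimp only
        rw [← ENNReal.ofReal_add
          (div_nonneg (mul_nonneg (gam_nonneg _ _ _ hs0.le _) (hFnn _ _))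
            (Real.rpow_nonneg (norm_nonneg _) _))
          (div_nonneg (mul_nonneg (gam_nonneg _ _ _ hs0.le _) (hFnn _ _))
            (Real.rpow_nonneg (norm_nonneg _) _)),
          ← add_div, ← add_mul]
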